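/- In the MHW swaption setting, let γ̃ := max_{ι = α',…,ω'−1} v_{α'ι}/v_{α',ι+1}. If γ̃ ≤ γ ≤ 1, then f is strictly decreasing on ℝ. -/
import Mathlib


noncomputable def mhwVol (a σ τ : ℝ) : ℝ :=
  if a = 0 then σ * τ else σ * (1 - Real.exp (-(a * τ))) / a

lemma mhwVol_nonneg {a σ τ : ℝ} (ha : 0 ≤ a) (hσ : 0 < σ) (hτ : 0 ≤ τ) :
    0 ≤ mhwVol a σ τ := by
  unfold mhwVol
  split_ifs with h
  · positivity
  · have ha' : 0 < a := lt_of_le_of_ne ha (Ne.symm h)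
    have : Real.exp (-(a * τ)) ≤ 1 := Real.exp_le_one_iff.mpr (by nlinarith)
    have : 0 ≤ 1 - Real.exp (-(a * τ)) := by linarith
    positivity

lemma mhwVol_pos {a σ τ : ℝ} (ha : 0 ≤ a) (hσ : 0 < σ) (hτ : 0 < τ) :
    0 < mhwVol a σ τ := by
  unfold mhwVol
  split_ifs with h
  · positivity
  · have ha' : 0 < a := lt_of_le_of_ne ha (Ne.symm h)
    have : Real.exp (-(a * τ)) < 1 := Real.exp_lt_one_iff.mpr (by nlinarith)
    have : 0 < 1 - Real.exp (-(a * τ)) := by linarith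
    positivity

lemma mhwVol_zero (a σ : ℝ) : mhwVol a σ 0 = 0 := by
  unfold mhwVol
  split_ifs with h <;> simp

lemma step_strictMono {t : ℕ → ℝ} {α ω : ℕ}
    (ht : ∀ j ∈ Finset.Ico α ω, t j < t (j+1)) :
    ∀ i j, α ≤ i → i < j → j ≤ ω → t i < t j := by
  intro i j hαi hij hjω
  induction j with
  | zero => omega
  | succ k ih =>
    rcases Nat.lt_succ_iff_lt_or_eq.mp hij with h | h
    · exact (ih h (by omega)).trans (ht k (Finset.mem_Ico.mpr ⟨by omega, by omega⟩))
    · subst h; exact ht i (Finset.mem_Ico.mpr ⟨hαi, by omega⟩)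

/-- If `γ̃ := max_ι v_α'ι / v_α'(ι+1) ≤ γ ≤ 1`, then `f` is strictly decreasing. -/
theorem f_strictAnti_of_large_gamma
    (a σ γ ζ : ℝ) (ha : 0 ≤ a) (hσ : 0 < σ) (hγ0 : 0 ≤ γ) (hγ1 : γ ≤ 1) (hζ : 0 < ζ)
    (α ω α' ω' : ℕ) (hω : α + 1 ≤ ω) (hω' : α' + 2 ≤ ω')
    (t t' : ℕ → ℝ)
    (ht : ∀ j ∈ Finset.Ico α ω, t j < t (j+1))
    (ht' : ∀ ι ∈ Finset.Ico α' ω', t' ι < t' (ι+1))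
    (hstart : t' α' = t α) (hend : t' ω' = t ω)
    (c B : ℕ → ℝ) (hc : ∀ j ∈ Finset.Icc (α+1) ω, 0 < c j)
    (hB : ∀ j ∈ Finset.Icc (α+1) ω, 0 < B j)
    (B' β : ℕ → ℝ) (hB' : ∀ ι ∈ Finset.Ico α' ω', 0 < B' ι) (hB'α' : B' α' = 1)
    (hβ : ∀ ι ∈ Finset.Ico α' ω', 1 ≤ β ι)
    (ς ς' ν : ℕ → ℝ)
    (hς : ∀ j, ς j = (1 - γ) * mhwVol a σ (t j - t α))
    (hς' : ∀ ι, ς' ι = (1 - γ) * mhwVol a σ (t' ι - t α))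
    (hν : ∀ ι, ν ι = mhwVol a σ (t' ι - t α) - γ * mhwVol a σ (t' (ι+1) - t α))
    (f : ℝ → ℝ)
    (hf : ∀ ξ : ℝ, f ξ =
        (∑ j ∈ Finset.Icc (α+1) ω, c j * B j * Real.exp (-(ς j) * ξ - (ς j)^2 * ζ^2 / 2))
      + (∑ ι ∈ Finset.Ico (α'+1) ω', B' ι * Real.exp (-(ς' ι) * ξ - (ς' ι)^2 * ζ^2 / 2))
      - (∑ ι ∈ Finset.Ico α' ω', β ι * B' ι * Real.exp (-(ν ι) * ξ - (ν ι)^2 * ζ^2 / 2)))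
    (hγt : (Finset.Ico α' ω').sup' (Finset.nonempty_Ico.mpr (by omega))
      (fun ι => mhwVol a σ (t' ι - t α) / mhwVol a σ (t' (ι+1) - t α)) ≤ γ) :
    StrictAnti f := by
  -- positivity of v(t' ι - t α) for α' < ι ≤ ω'
  have hv'pos : ∀ ι, α' < ι → ι ≤ ω' → 0 < mhwVol a σ (t' ι - t α) := by
    intro ι h1 h2
    refine mhwVol_pos ha hσ ?_
    have := step_strictMono ht' α' ι le_rfl h1 h2
    rw [hstart] at this; linarith
  -- nonneg v over fixed leg
  have hvnn : ∀ j ∈ Finset.Icc (α+1) ω, 0 ≤ mhwVol a σ (t j - t α) := by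
    intro j hj
    rw [Finset.mem_Icc] at hj
    refine mhwVol_nonneg ha hσ ?_
    have := step_strictMono ht α j le_rfl (by omega) hj.2
    linarith
  -- ς nonneg
  have hςnn : ∀ j ∈ Finset.Icc (α+1) ω, 0 ≤ ς j := by
    intro j hj
    rw [hς j]
    exact mul_nonneg (by linarith) (hvnn j hj)
  have hς'nn : ∀ ι ∈ Finset.Ico (α'+1) ω', 0 ≤ ς' ι := by
    intro ι hι
    rw [Finset.mem_Ico] at hι
    rw [hς' ι]
    exact mul_nonneg (by linarith) (hv'pos ι (by omega) (by omega)).le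
  -- each ratio ≤ γ
  have hratio : ∀ ι ∈ Finset.Ico α' ω',
      mhwVol a σ (t' ι - t α) / mhwVol a σ (t' (ι+1) - t α) ≤ γ := by
    intro ι hι
    exact le_trans (Finset.le_sup' (fun ι => mhwVol a σ (t' ι - t α) / mhwVol a σ (t' (ι+1) - t α)) hι) hγt
  -- ν nonpos
  have hνnp : ∀ ι ∈ Finset.Ico α' ω', ν ι ≤ 0 := by
    intro ι hι
    have hι' := Finset.mem_Ico.mp hι
    have hw : 0 < mhwVol a σ (t' (ι+1) - t α) := hv'pos (ι+1) (by omega) (by omega)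
    have := (div_le_iff₀ hw).mp (hratio ι hι)
    rw [hν ι]; linarith
  -- γ > 0
  have hγpos : 0 < γ := by
    have hmem : α' + 1 ∈ Finset.Ico α' ω' := Finset.mem_Ico.mpr ⟨by omega, by omega⟩
    have h1 := hv'pos (α'+1) (by omega) (by omega)
    have h2 := hv'pos (α'+2) (by omega) (by omega)
    have := hratio (α'+1) hmem
    have : 0 < mhwVol a σ (t' (α'+1) - t α) / mhwVol a σ (t' (α'+1+1) - t α) :=
      div_pos h1 h2
    linarith [hratio (α'+1) hmem]
  -- ν α' < 0
  have hνneg : ν α' < 0 := by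
    rw [hν α', hstart]
    simp only [sub_self, mhwVol_zero]
    have h1 := hv'pos (α'+1) (by omega) (by omega)
    nlinarith
  intro x y hxy
  rw [hf x, hf y]
  have h1 : (∑ j ∈ Finset.Icc (α+1) ω, c j * B j * Real.exp (-(ς j) * y - (ς j)^2 * ζ^2 / 2))
      ≤ ∑ j ∈ Finset.Icc (α+1) ω, c j * B j * Real.exp (-(ς j) * x - (ς j)^2 * ζ^2 / 2) := by
    refine Finset.sum_le_sum fun j hj => ?_
    have hcB : 0 ≤ c j * B j := le_of_lt (mul_pos (hc j hj) (hB j hj))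
    have hk := hςnn j hj
    refine mul_le_mul_of_nonneg_left (Real.exp_le_exp.mpr ?_) hcB
    nlinarith
  have h2 : (∑ ι ∈ Finset.Ico (α'+1) ω', B' ι * Real.exp (-(ς' ι) * y - (ς' ι)^2 * ζ^2 / 2))
      ≤ ∑ ι ∈ Finset.Ico (α'+1) ω', B' ι * Real.exp (-(ς' ι) * x - (ς' ι)^2 * ζ^2 / 2) := by
    refine Finset.sum_le_sum fun ι hι => ?_
    have hι' := Finset.mem_Ico.mp hι
    have hBp : 0 ≤ B' ι := (hB' ι (Finset.mem_Ico.mpr ⟨by omega, hι'.2⟩)).le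
    have hk := hς'nn ι hι
    refine mul_le_mul_of_nonneg_left (Real.exp_le_exp.mpr ?_) hBp
    nlinarith
  have h3 : (∑ ι ∈ Finset.Ico α' ω', β ι * B' ι * Real.exp (-(ν ι) * x - (ν ι)^2 * ζ^2 / 2))
      < ∑ ι ∈ Finset.Ico α' ω', β ι * B' ι * Real.exp (-(ν ι) * y - (ν ι)^2 * ζ^2 / 2) := by
    refine Finset.sum_lt_sum (fun ι hι => ?_) ⟨α', Finset.mem_Ico.mpr ⟨le_rfl, by omega⟩, ?_⟩
    · have hβB : 0 ≤ β ι * B' ι :=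
        le_of_lt (mul_pos (lt_of_lt_of_le one_pos (hβ ι hι)) (hB' ι hι))
      have hk := hνnp ι hι
      refine mul_le_mul_of_nonneg_left (Real.exp_le_exp.mpr ?_) hβB
      nlinarith
    · have hmem : α' ∈ Finset.Ico α' ω' := Finset.mem_Ico.mpr ⟨le_rfl, by omega⟩
      have hβB : 0 < β α' * B' α' :=
        mul_pos (lt_of_lt_of_le one_pos (hβ α' hmem)) (hB' α' hmem)
      refine mul_lt_mul_of_pos_left (Real.exp_lt_exp.mpr ?_) hβB
      nlinarith [hνneg]
  linarith
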